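/- arXiv:0806.0450 — 2 statements merged into one kernel-verified Lean document; each statement's English description precedes it below -/
import Mathlib

section
/- Let N ≥ 1 and let λ₁, …, λ_N : ℝ → ℝ be real analytic functions (analytic at every point of ℝ). Then it is impossible that both max_{1 ≤ i ≤ N} λᵢ(0) ≤ 1/2 and max_{1 ≤ i ≤ N} λᵢ(θ) = 1 for every θ in the closed interval [1, 2]. -/
/-- No finite family of real analytic functions λ₁, …, λ_N : ℝ → ℝ can have pointwise
maximum at most 1/2 at θ = 0 while having pointwise maximum exactly 1 throughout the
closed interval [1, 2]. -/
theorem no_analytic_plateau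
    (N : ℕ) (hN : 1 ≤ N) (lam : Fin N → ℝ → ℝ)
    (hana : ∀ i : Fin N, ∀ x : ℝ, AnalyticAt ℝ (lam i) x) :
    ¬ ((⨆ i : Fin N, lam i 0) ≤ 1 / 2 ∧
        ∀ θ ∈ Set.Icc (1 : ℝ) 2, (⨆ i : Fin N, lam i θ) = 1) := by
  rintro ⟨h0, h1⟩
  have : NeZero N := ⟨by omega⟩
  -- each lam i 0 ≤ 1/2
  have hle : ∀ i : Fin N, lam i 0 ≤ 1 / 2 := fun i =>
    le_trans (le_ciSup (f := fun j => lam j 0) (Set.Finite.bddAbove (Set.finite_range _)) i) h0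
  -- for each θ ∈ [1,2] some i with lam i θ = 1
  have hattain : ∀ θ ∈ Set.Icc (1 : ℝ) 2, ∃ i, lam i θ = 1 := by
    intro θ hθ
    obtain ⟨i, hi⟩ := Finite.exists_max (fun i => lam i θ)
    refine ⟨i, le_antisymm ?_ ?_⟩
    · calc lam i θ ≤ ⨆ j, lam j θ := le_ciSup (f := fun j => lam j θ) (Set.Finite.bddAbove (Set.finite_range _)) i
        _ = 1 := h1 θ hθ
    · rw [← h1 θ hθ]; exact ciSup_le hi
  -- closed sets
  set S : Fin N → Set ℝ := fun i => {x | lam i x = 1} ∩ Set.Icc 1 2 with hS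
  have hclosed : ∀ i, IsClosed (S i) := by
    intro i
    exact (isClosed_eq (continuous_iff_continuousAt.2 fun y => (hana i y).continuousAt) continuous_const).inter isClosed_Icc
  have hcover : Set.Icc (1 : ℝ) 2 ⊆ ⋃ i, S i := by
    intro θ hθ
    obtain ⟨i, hi⟩ := hattain θ hθ
    exact Set.mem_iUnion.2 ⟨i, hi, hθ⟩
  -- some S i has nonempty interior
  have : ∃ i, (interior (S i)).Nonempty := by
    by_contra h
    push_neg at h
    have hnd : ∀ i, IsNowhereDense (S i) := fun i =>
      (hclosed i).isNowhereDense_iff.2 (h i)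
    have hmeagre : IsMeagre (⋃ i, S i) :=
      isMeagre_iff_countable_union_isNowhereDense.2
        ⟨Set.range S, by rintro t ⟨i, rfl⟩; exact hnd i,
          (Set.finite_range S).countable, by rw [Set.sUnion_range]⟩
    have hdense : Dense ((⋃ i, S i)ᶜ) := dense_of_mem_residual hmeagre
    obtain ⟨x, hx1, hx2⟩ := hdense.exists_mem_open isOpen_Ioo
      (Set.nonempty_Ioo.2 (by norm_num : (1:ℝ) < 2))
    exact hx1 (hcover (Set.Ioo_subset_Icc_self hx2))
  obtain ⟨i, x, hx⟩ := this
  -- identity theorem: lam i = 1 everywhere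
  have heq : Set.EqOn (lam i) (fun _ => (1:ℝ)) Set.univ := by
    apply AnalyticOnNhd.eqOn_of_preconnected_of_eventuallyEq
      (fun y _ => hana i y) (fun y _ => analyticOnNhd_const y (Set.mem_univ y))
      isPreconnected_univ (Set.mem_univ x)
    filter_upwards [isOpen_interior.mem_nhds hx] with y hy
    exact (interior_subset hy).1
  have := hle i
  rw [heq (Set.mem_univ 0)] at this
  norm_num at this
end

section
/- Let N ≥ 1 and let E : ℝ → Matrix (Fin N) (Fin N) ℂ be a matrix-valued function such that each entry θ ↦ E(θ)ᵢⱼ is an analytic function from ℝ to ℂ (analytic at every real point), and such that E(θ) is Hermitian for every θ ∈ ℝ. For θ ∈ ℝ let a(θ) denote the largest eigenvalue of the Hermitian matrix E(θ). Then it is impossible that both a(0) ≤ 1/2 and a(θ) = 1 for every θ in the closed interval [1, 2]. -/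
/-!
Since the largest eigenvalue of `E θ` is `1` on `[1, 2]`, the real-analytic function
`θ ↦ det (1 - E θ)` vanishes there; by the identity principle it vanishes everywhere, so `1` is
an eigenvalue of `E 0`, contradicting `a(0) ≤ 1/2`.
-/

open Set Topology

namespace Matrix

variable {n : Type*} [Fintype n] [DecidableEq n]

theorem analyticAt_det {𝕜 E R : Type*} [NontriviallyNormedField 𝕜] [NormedAddCommGroup E]
    [NormedSpace 𝕜 E] [NormedCommRing R] [NormedAlgebra 𝕜 R] {M : E → Matrix n n R} {x : E}
    (hM : ∀ i j, AnalyticAt 𝕜 (fun t => M t i j) x) : AnalyticAt 𝕜 (fun t => (M t).det) x := by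
  simp_rw [det_apply']
  exact Finset.analyticAt_fun_sum _ fun σ _ =>
    analyticAt_const.mul (Finset.analyticAt_fun_prod _ fun i _ => hM (σ i) i)

theorem mem_spectrum_iff_det_eq_zero {S K : Type*} [CommSemiring S] [Field K] [Algebra S K]
    {A : Matrix n n K} {r : S} :
    r ∈ spectrum S A ↔ (algebraMap S (Matrix n n K) r - A).det = 0 := by
  rw [spectrum.mem_iff, isUnit_iff_isUnit_det, isUnit_iff_ne_zero, not_not]

theorem mem_spectrum_of_forall_mem_Icc {𝕜 : Type*} [RCLike 𝕜] {M : ℝ → Matrix n n 𝕜}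
    (hM : ∀ i j x, AnalyticAt ℝ (fun t => M t i j) x) {a b r : ℝ} (hab : a < b)
    (hr : ∀ t ∈ Icc a b, r ∈ spectrum ℝ (M t)) (t : ℝ) : r ∈ spectrum ℝ (M t) := by
  set f : ℝ → 𝕜 := fun t => (algebraMap ℝ (Matrix n n 𝕜) r - M t).det
  have hf : AnalyticOnNhd ℝ f univ := fun x _ =>
    analyticAt_det fun i j => analyticAt_const.sub (hM i j x)
  have hIcc : Icc a b ∈ 𝓝 ((a + b) / 2) := Icc_mem_nhds (by linarith) (by linarith)
  have hf_zero : f =ᶠ[𝓝 ((a + b) / 2)] 0 := by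
    filter_upwards [hIcc] with s hs using mem_spectrum_iff_det_eq_zero.mp (hr s hs)
  exact mem_spectrum_iff_det_eq_zero.mpr <|
    hf.eqOn_zero_of_preconnected_of_eventuallyEq_zero isPreconnected_univ (mem_univ _)
      hf_zero (mem_univ t)

namespace IsHermitian

variable {𝕜 : Type*} [RCLike 𝕜] {A : Matrix n n 𝕜}

theorem iSup_eigenvalues_mem_spectrum [Nonempty n] (hA : A.IsHermitian) :
    (⨆ i, hA.eigenvalues i) ∈ spectrum ℝ A := by
  obtain ⟨i, hi⟩ := exists_eq_ciSup_of_finite (f := hA.eigenvalues)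
  exact hi ▸ hA.eigenvalues_mem_spectrum_real i

theorem le_iSup_eigenvalues_of_mem_spectrum (hA : A.IsHermitian) {r : ℝ}
    (hr : r ∈ spectrum ℝ A) : r ≤ ⨆ i, hA.eigenvalues i := by
  obtain ⟨i, rfl⟩ := hA.spectrum_real_eq_range_eigenvalues ▸ hr
  exact le_ciSup (finite_range _).bddAbove i

end IsHermitian

end Matrix

/-- The analytic core of Theorem 3.2: for a real-analytic one-parameter family of
Hermitian matrices E(θ), the largest eigenvalue a(θ) cannot be at most 1/2 at θ = 0
while being exactly 1 for every θ ∈ [1, 2]. -/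
theorem no_hermitian_eigenvalue_plateau
    (N : ℕ) (hN : 1 ≤ N) (E : ℝ → Matrix (Fin N) (Fin N) ℂ)
    (hana : ∀ i j : Fin N, ∀ x : ℝ, AnalyticAt ℝ (fun θ : ℝ => E θ i j) x)
    (hherm : ∀ θ : ℝ, (E θ).IsHermitian) :
    ¬ ((⨆ i : Fin N, (hherm 0).eigenvalues i) ≤ 1 / 2 ∧
        ∀ θ ∈ Set.Icc (1 : ℝ) 2, (⨆ i : Fin N, (hherm θ).eigenvalues i) = 1) := by
  rintro ⟨h0, h12⟩
  have : NeZero N := ⟨by omega⟩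
  have hplateau : ∀ θ ∈ Icc (1 : ℝ) 2, (1 : ℝ) ∈ spectrum ℝ (E θ) := fun θ hθ =>
    h12 θ hθ ▸ (hherm θ).iSup_eigenvalues_mem_spectrum
  have h1 : (1 : ℝ) ∈ spectrum ℝ (E 0) :=
    Matrix.mem_spectrum_of_forall_mem_Icc hana one_lt_two hplateau 0
  linarith [(hherm 0).le_iSup_eigenvalues_of_mem_spectrum h1]
end
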